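/- Given any finite set S ⊆ [n]^3, at least one of the following holds: (i) there exist a 1-dimensional slice s with free coordinate i and a point q ∈ L_s such that both {x ∈ S ∩ L_s : x_i ≤ q_i} and {x ∈ S ∩ L_s : x_i ≥ q_i} have size at least |S|/1600; (ii) there exist a 2-dimensional slice s with free coordinates i, j, a point q ∈ L_s, and signs φ_i, φ_j ∈ {±1} such that both {x ∈ S ∩ L_s : φ_i(x_i − q_i) > 0 and φ_j(x_j − q_j) > 0} and {x ∈ S ∩ L_s : φ_i(x_i − q_i) < 0 and φ_j(x_j − q_j) < 0} have size at least |S|/400; or (iii) there exist q ∈ [n]^3 and φ ∈ {±1}^3 such that both {x ∈ S : φ_i(x_i − q_i) > 0 for all i ∈ [3]} and {x ∈ S : φ_i(x_i − q_i) < 0 for all i ∈ [3]} have size at least |S|/16. -/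
import Mathlib


/-- Symbols of the partial-information alphabet: −1, 0, 1, ≤, ≥, ◇. -/
inductive PISym : Type where
  | neg | zero | pos | sle | sge | dia
deriving DecidableEq

/-- Points of the `k`-dimensional grid, as integer vectors. -/
abbrev Pt (k : ℕ) := Fin k → ℤ

/-- `x ∈ [n]^k`. -/
def inGrid (n k : ℕ) (x : Pt k) : Prop := ∀ i, 1 ≤ x i ∧ x i ≤ (n : ℤ)

/-- The `i`-th standard unit vector. -/
def eVec (k : ℕ) (i : Fin k) : Pt k := fun j => if j = i then 1 else 0

/-- A slice of `[n]^k`: `none` marks a free coordinate. -/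
abbrev Slice (k : ℕ) := Fin k → Option ℤ

def fullSlice (k : ℕ) : Slice k := fun _ => none

def validSlice (n : ℕ) {k : ℕ} (s : Slice k) : Prop :=
  ∀ i v, s i = some v → 1 ≤ v ∧ v ≤ (n : ℤ)

def inSlice {k : ℕ} (s : Slice k) (x : Pt k) : Prop :=
  ∀ i v, s i = some v → x i = v

/-- Monotone partial-information function (Definition 2.4). -/
def MonoPI (n k : ℕ) (p1 : Pt k → Fin k → PISym) (p2 : Pt k → PISym) : Prop :=
  (∀ x, inGrid n k x → p2 x = PISym.pos ∨ p2 x = PISym.neg ∨ p2 x = PISym.dia) ∧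
  (∀ x y, inGrid n k x → inGrid n k y → ∀ i : Fin k,
    (p1 x i = PISym.pos → x ≤ y → y i = x i →
      p1 y i = PISym.pos ∧
        (y i < (n : ℤ) → p1 (y + eVec k i) i ∈ ({PISym.pos, PISym.zero, PISym.sge} : Set PISym))) ∧
    (p1 x i = PISym.neg → y ≤ x → y i = x i →
      p1 y i = PISym.neg ∧
        (1 < y i → p1 (y - eVec k i) i ∈ ({PISym.neg, PISym.zero, PISym.sle} : Set PISym))) ∧
    (p1 x i = PISym.zero → y ≤ x → y i = x i →
      p1 y i ∈ ({PISym.zero, PISym.neg, PISym.sle} : Set PISym)) ∧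
    (p1 x i = PISym.zero → x ≤ y → y i = x i →
      p1 y i ∈ ({PISym.zero, PISym.pos, PISym.sge} : Set PISym)) ∧
    (p1 x i = PISym.sle → y ≤ x → y i = x i → p1 y i ∈ ({PISym.neg, PISym.sle} : Set PISym)) ∧
    (p1 x i = PISym.sge → x ≤ y → y i = x i → p1 y i ∈ ({PISym.pos, PISym.sge} : Set PISym))) ∧
  (∀ x, inGrid n k x → ∀ i : Fin k,
    (x i = 1 → p1 x i ∈ ({PISym.zero, PISym.pos, PISym.sge} : Set PISym)) ∧
    (x i = (n : ℤ) → p1 x i ∈ ({PISym.zero, PISym.neg, PISym.sle} : Set PISym))) ∧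
  (∀ x y, inGrid n k x → inGrid n k y → x ≤ y →
    (p2 x = PISym.pos → p2 y = PISym.pos) ∧ (p2 y = PISym.neg → p2 x = PISym.neg))

/-- Postfixed points of a PI function on a slice. -/
def Post (n k : ℕ) (p1 : Pt k → Fin k → PISym) (s : Slice k) : Set (Pt k) :=
  {x | inGrid n k x ∧ inSlice s x ∧
       ∀ i, s i = none → p1 x i ∈ ({PISym.pos, PISym.zero, PISym.sge} : Set PISym)}

/-- Prefixed points of a PI function on a slice. -/
def Pre (n k : ℕ) (p1 : Pt k → Fin k → PISym) (s : Slice k) : Set (Pt k) :=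
  {x | inGrid n k x ∧ inSlice s x ∧
       ∀ i, s i = none → p1 x i ∈ ({PISym.neg, PISym.zero, PISym.sle} : Set PISym)}

/-- Safe PI functions (Definition 2.8). -/
def SafePI (n k : ℕ) (p1 : Pt k → Fin k → PISym) (p2 : Pt k → PISym) : Prop :=
  MonoPI n k p1 p2 ∧
  ∀ s : Slice k, validSlice n s →
    (∀ J, IsGreatest (Post n k p1 s) J →
      ∀ x, inGrid n k x → inSlice s x → x ≤ J → x ≠ J →
        (∀ i, s i = none → x i < J i →
          p1 x i ∈ ({PISym.neg, PISym.zero, PISym.pos} : Set PISym)) ∧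
        (∃ i, s i = none ∧ x i < J i ∧ p1 x i = PISym.pos)) ∧
    (∀ M, IsLeast (Pre n k p1 s) M →
      ∀ x, inGrid n k x → inSlice s x → M ≤ x → x ≠ M →
        (∀ i, s i = none → M i < x i →
          p1 x i ∈ ({PISym.neg, PISym.zero, PISym.pos} : Set PISym)) ∧
        (∃ i, s i = none ∧ M i < x i ∧ p1 x i = PISym.neg))

/-- `x^{−i}` for `i ∈ [k]`. -/
def dminus {k : ℕ} (i : Fin k) (x : Pt k) : Pt k :=
  fun j => if j ≠ i ∧ 1 < x j then x j - 1 else x j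

/-- `x^{−(k+1)}`. -/
def dminusAll {k : ℕ} (x : Pt k) : Pt k :=
  fun j => if 1 < x j then x j - 1 else x j

/-- `x^{+i}` for `i ∈ [k]`. -/
def dplus (n : ℕ) {k : ℕ} (i : Fin k) (x : Pt k) : Pt k :=
  fun j => if j ≠ i ∧ x j < (n : ℤ) then x j + 1 else x j

/-- `x^{+(k+1)}`. -/
def dplusAll (n : ℕ) {k : ℕ} (x : Pt k) : Pt k :=
  fun j => if x j < (n : ℤ) then x j + 1 else x j

def IntPlus {k : ℕ} (p1 : Pt k → Fin k → PISym) (i : Fin k) : Set (Pt k) :=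
  {x | p1 (dminus i x) i = PISym.pos}

def IntPlusLast {k : ℕ} (p1 : Pt k → Fin k → PISym) (p2 : Pt k → PISym) : Set (Pt k) :=
  {x | p2 (dminusAll x) = PISym.pos ∨
    ∃ i, p1 (dminus i x) i ∈ ({PISym.pos, PISym.zero, PISym.sge} : Set PISym) ∧
         p2 (dminus i x) = PISym.pos}

def IntMinus (n : ℕ) {k : ℕ} (p1 : Pt k → Fin k → PISym) (i : Fin k) : Set (Pt k) :=
  {x | p1 (dplus n i x) i = PISym.neg}

def IntMinusLast (n : ℕ) {k : ℕ} (p1 : Pt k → Fin k → PISym) (p2 : Pt k → PISym) : Set (Pt k) :=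
  {x | p2 (dplusAll n x) = PISym.neg ∨
    ∃ i, p1 (dplus n i x) i ∈ ({PISym.neg, PISym.zero, PISym.sle} : Set PISym) ∧
         p2 (dplus n i x) = PISym.neg}

/-- `Cand⁺(p)` relative to `J = J(p)` and `M = M(p)`. -/
def CandPlus (n k : ℕ) (p1 : Pt k → Fin k → PISym) (p2 : Pt k → PISym) (J M : Pt k) :
    Set (Pt k) :=
  {x | inGrid n k x ∧ J ≤ x ∧ x ≤ M ∧
    (∀ i, p1 x i ≠ PISym.neg ∧ x ∉ IntPlus p1 i) ∧
    p2 x ≠ PISym.neg ∧ x ∉ IntPlusLast p1 p2}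

/-- `Cand⁻(p)` relative to `J = J(p)` and `M = M(p)`. -/
def CandMinus (n k : ℕ) (p1 : Pt k → Fin k → PISym) (p2 : Pt k → PISym) (J M : Pt k) :
    Set (Pt k) :=
  {x | inGrid n k x ∧ J ≤ x ∧ x ≤ M ∧
    (∀ i, p1 x i ≠ PISym.pos ∧ x ∉ IntMinus n p1 i) ∧
    p2 x ≠ PISym.pos ∧ x ∉ IntMinusLast n p1 p2}

/-- The information partial order on symbols: `symDom a b` means `a ⇒ b`. -/
def symDom (a b : PISym) : Prop :=
  b = PISym.dia ∨ a = b ∨ (a = PISym.pos ∧ b = PISym.sge) ∨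
  (a = PISym.zero ∧ (b = PISym.sge ∨ b = PISym.sle)) ∨ (a = PISym.neg ∧ b = PISym.sle)

/-- `p ⇒ p'`: `p` dominates (is more informative than) `p'`. -/
def PIdom (n k : ℕ) (p1 : Pt k → Fin k → PISym) (p2 : Pt k → PISym)
    (q1 : Pt k → Fin k → PISym) (q2 : Pt k → PISym) : Prop :=
  ∀ x, inGrid n k x → (∀ i, symDom (p1 x i) (q1 x i)) ∧ symDom (p2 x) (q2 x)

/-- A sign value `a ∈ {−1,0,1}` is consistent with a symbol `b`. -/
def consS (a : ℤ) (b : PISym) : Prop :=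
  match b with
  | PISym.dia => True
  | PISym.pos => a = 1
  | PISym.neg => a = -1
  | PISym.zero => a = 0
  | PISym.sge => a = 0 ∨ a = 1
  | PISym.sle => a = -1 ∨ a = 0

/-- A sign function `f` is consistent with the PI function `p` (i.e., `f ⇒ p`). -/
def SignCons (n k : ℕ) (f1 : Pt k → Pt k) (f2 : Pt k → ℤ)
    (p1 : Pt k → Fin k → PISym) (p2 : Pt k → PISym) : Prop :=
  ∀ x, inGrid n k x → (∀ i, consS (f1 x i) (p1 x i)) ∧ consS (f2 x) (p2 x)

/-- Monotone sign function: `x ↦ (x + f1 x, f2 x)` is well defined and monotone. -/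
def MonoSign (n k : ℕ) (f1 : Pt k → Pt k) (f2 : Pt k → ℤ) : Prop :=
  (∀ x, inGrid n k x →
    (∀ i, f1 x i = -1 ∨ f1 x i = 0 ∨ f1 x i = 1) ∧ (f2 x = 1 ∨ f2 x = -1)) ∧
  (∀ x, inGrid n k x → inGrid n k (x + f1 x)) ∧
  (∀ a b, inGrid n k a → inGrid n k b → a ≤ b → a + f1 a ≤ b + f1 b ∧ f2 a ≤ f2 b)

def PostF (n k : ℕ) (f1 : Pt k → Pt k) (s : Slice k) : Set (Pt k) :=
  {x | inGrid n k x ∧ inSlice s x ∧ ∀ i, s i = none → 0 ≤ f1 x i}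

def PreF (n k : ℕ) (f1 : Pt k → Pt k) (s : Slice k) : Set (Pt k) :=
  {x | inGrid n k x ∧ inSlice s x ∧ ∀ i, s i = none → f1 x i ≤ 0}

/-- Safe sign functions (conditions (1') and (2') of Definition 2.8). -/
def SafeSign (n k : ℕ) (f1 : Pt k → Pt k) (f2 : Pt k → ℤ) : Prop :=
  MonoSign n k f1 f2 ∧
  ∀ s : Slice k, validSlice n s →
    (∀ J, IsGreatest (PostF n k f1 s) J →
      ∀ x, inGrid n k x → inSlice s x → x ≤ J → x ≠ J →
        ∃ i, s i = none ∧ x i < J i ∧ f1 x i = 1) ∧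
    (∀ M, IsLeast (PreF n k f1 s) M →
      ∀ x, inGrid n k x → inSlice s x → M ≤ x → x ≠ M →
        ∃ i, s i = none ∧ M i < x i ∧ f1 x i = -1)

/-- The revealed solutions of a PI function. -/
def SolPI (n k : ℕ) (p1 : Pt k → Fin k → PISym) (p2 : Pt k → PISym) : Set (Pt k) :=
  {x | inGrid n k x ∧
    (((∀ i, p1 x i ∈ ({PISym.pos, PISym.zero, PISym.sge} : Set PISym)) ∧ p2 x = PISym.pos) ∨
     ((∀ i, p1 x i ∈ ({PISym.neg, PISym.zero, PISym.sle} : Set PISym)) ∧ p2 x = PISym.neg))}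

/-- `x ≪_s y` : `x ⪯ y` with strict inequality in every free coordinate of `s`. -/
def lls {k : ℕ} (s : Slice k) (x y : Pt k) : Prop :=
  x ≤ y ∧ ∀ i, s i = none → x i < y i

/-- `s` is a slice witnessing `ŝ(x,p) ≠ nil`: `x ∈ L_s` and `x ≪_s J_s(p)`. -/
def HasSlice (n k : ℕ) (p1 : Pt k → Fin k → PISym) (x : Pt k) (s : Slice k) : Prop :=
  validSlice n s ∧ inSlice s x ∧ ∃ J, IsGreatest (Post n k p1 s) J ∧ lls s x J

/-- `s = ŝ(x,p)`: `s` is the maximal slice with `x ∈ L_s` and `x ≪_s J_s(p)`. -/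
def MaxSlice (n k : ℕ) (p1 : Pt k → Fin k → PISym) (x : Pt k) (s : Slice k) : Prop :=
  HasSlice n k p1 x s ∧
  ∀ s', HasSlice n k p1 x s' → ∀ i, s' i = none → s i = none

-- Auxiliary lemmas


lemma fin3_cover (d a i j : Fin 3) (hda : d ≠ a) (hid : i ≠ d) (hia : i ≠ a) :
    j = d ∨ j = a ∨ j = i := by
  revert d a i j; decide

lemma fin3_two : ∀ d : Fin 3, ∃ a b : Fin 3, a ≠ b ∧ a ≠ d ∧ b ≠ d := by decide

lemma fin3_other : ∀ d a : Fin 3, d ≠ a → ∃ i : Fin 3, i ≠ d ∧ i ≠ a := by decide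

def prj (i : Fin 3) (x : Pt 3) : ℤ := x i

lemma ncard_glue (S F : Finset (Pt 3)) (P : Pt 3 → Prop) (hFS : F ⊆ S)
    (hFP : ∀ x ∈ F, P x) : F.card ≤ {x ∈ (S : Set (Pt 3)) | P x}.ncard := by
  have h1 : (F : Set (Pt 3)) ⊆ {x ∈ (S : Set (Pt 3)) | P x} :=
    fun x hx => ⟨hFS hx, hFP x hx⟩
  have h2 : {x ∈ (S : Set (Pt 3)) | P x}.Finite :=
    S.finite_toSet.subset (Set.sep_subset _ _)
  calc F.card = (F : Set (Pt 3)).ncard := (Set.ncard_coe_finset F).symm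
    _ ≤ _ := Set.ncard_le_ncard h1 h2

lemma card_le_split (T : Finset (Pt 3)) (g : Pt 3 → ℤ) (v : ℤ) :
    (T.filter fun x => g x ≤ v).card ≤
      (T.filter fun x => g x < v).card + (T.filter fun x => g x = v).card := by
  have hsub : T.filter (fun x => g x ≤ v) ⊆
      T.filter (fun x => g x < v) ∪ T.filter (fun x => g x = v) := by
    intro x hx
    simp only [Finset.mem_filter, Finset.mem_union] at *
    rcases hx with ⟨hxT, hxv⟩
    rcases lt_or_eq_of_le hxv with h | h
    · exact Or.inl ⟨hxT, h⟩
    · exact Or.inr ⟨hxT, h⟩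
  exact (Finset.card_le_card hsub).trans (Finset.card_union_le _ _)

lemma card_ge_split (T : Finset (Pt 3)) (g : Pt 3 → ℤ) (v : ℤ) :
    (T.filter fun x => v ≤ g x).card ≤
      (T.filter fun x => v < g x).card + (T.filter fun x => g x = v).card := by
  have hsub : T.filter (fun x => v ≤ g x) ⊆
      T.filter (fun x => v < g x) ∪ T.filter (fun x => g x = v) := by
    intro x hx
    simp only [Finset.mem_filter, Finset.mem_union] at *
    rcases hx with ⟨hxT, hxv⟩
    rcases lt_or_eq_of_le hxv with h | h
    · exact Or.inl ⟨hxT, h⟩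
    · exact Or.inr ⟨hxT, h.symm⟩
  exact (Finset.card_le_card hsub).trans (Finset.card_union_le _ _)

lemma exists_median (T : Finset (Pt 3)) (g : Pt 3 → ℤ) (hT : T.Nonempty) :
    ∃ v, (∃ x ∈ T, g x = v) ∧ T.card ≤ 2 * (T.filter fun x => g x ≤ v).card ∧
      T.card ≤ 2 * (T.filter fun x => v ≤ g x).card := by
  set I := T.image g with hI
  have hIne : I.Nonempty := hT.image g
  set P := I.filter (fun v => T.card ≤ 2 * (T.filter fun x => g x ≤ v).card) with hP
  have hPne : P.Nonempty := by
    refine ⟨I.max' hIne, Finset.mem_filter.2 ⟨I.max'_mem hIne, ?_⟩⟩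
    have heq : T.filter (fun x => g x ≤ I.max' hIne) = T := by
      apply Finset.filter_true_of_mem
      intro x hx
      exact I.le_max' _ (Finset.mem_image_of_mem g hx)
    rw [heq]; omega
  set v := P.min' hPne with hv
  have hvP : v ∈ P := P.min'_mem hPne
  have hvI : v ∈ I := (Finset.mem_filter.1 hvP).1
  have hle : T.card ≤ 2 * (T.filter fun x => g x ≤ v).card := (Finset.mem_filter.1 hvP).2
  have h0 := Finset.card_filter_add_card_filter_not (s := T) (p := fun x => g x < v)
  have h1 : T.filter (fun a => ¬ g a < v) = T.filter (fun x => v ≤ g x) := by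
    apply Finset.filter_congr
    intro x _
    simp [not_lt]
  rw [h1] at h0
  refine ⟨v, ?_, hle, ?_⟩
  · obtain ⟨x, hx, hgx⟩ := Finset.mem_image.1 hvI
    exact ⟨x, hx, hgx⟩
  · by_contra hcon
    push_neg at hcon
    have hT1 : 1 ≤ T.card := Finset.card_pos.2 hT
    have hne : (T.filter fun x => g x < v).Nonempty := Finset.card_pos.1 (by omega)
    have hv''mem := Finset.max'_mem _ (hne.image g)
    obtain ⟨y, hy, hgy⟩ := Finset.mem_image.1 hv''mem
    have hyT : y ∈ T := (Finset.mem_filter.1 hy).1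
    have hyv : g y < v := (Finset.mem_filter.1 hy).2
    have heq : T.filter (fun x => g x ≤ g y) = T.filter (fun x => g x < v) := by
      apply Finset.filter_congr
      intro x hxT
      constructor
      · intro h; exact lt_of_le_of_lt h hyv
      · intro h
        rw [hgy]
        exact Finset.le_max' _ _ (Finset.mem_image_of_mem g (Finset.mem_filter.2 ⟨hxT, h⟩))
    have hgyP : g y ∈ P := Finset.mem_filter.2 ⟨Finset.mem_image_of_mem g hyT, by rw [heq]; omega⟩
    have hmin := P.min'_le _ hgyP
    omega


lemma sweep (U V : Finset (Pt 3)) (g : Pt 3 → ℤ) (σ δ : ℕ) (hδ : 1 ≤ δ)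
    (hU : ∀ w : ℤ, (U.filter fun x => g x = w).card ≤ σ)
    (hV : ∀ w : ℤ, (V.filter fun x => g x = w).card ≤ σ)
    (hUc : 2 * δ + 2 * σ ≤ U.card) (hVc : 2 * δ + 2 * σ ≤ V.card) :
    ∃ (w ε : ℤ), ((∃ x ∈ U, g x = w) ∨ ∃ x ∈ V, g x = w) ∧ (ε = 1 ∨ ε = -1) ∧
      δ ≤ (U.filter fun x => ε * (g x - w) < 0).card ∧
      δ ≤ (V.filter fun x => 0 < ε * (g x - w)).card := by
  have hUne : U.Nonempty := Finset.card_pos.1 (by omega)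
  have hVne : V.Nonempty := Finset.card_pos.1 (by omega)
  set PU := (U.image g).filter (fun v => δ + σ ≤ (U.filter fun x => g x ≤ v).card) with hPU
  have hPUne : PU.Nonempty := by
    refine ⟨(U.image g).max' (hUne.image g), Finset.mem_filter.2 ⟨Finset.max'_mem _ _, ?_⟩⟩
    have heq : U.filter (fun x => g x ≤ (U.image g).max' (hUne.image g)) = U := by
      apply Finset.filter_true_of_mem
      intro x hx
      exact Finset.le_max' _ _ (Finset.mem_image_of_mem g hx)
    rw [heq]; omega
  set u := PU.min' hPUne with hu
  have huP : u ∈ PU := PU.min'_mem hPUne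
  have huI : u ∈ U.image g := (Finset.mem_filter.1 huP).1
  have hule : δ + σ ≤ (U.filter fun x => g x ≤ u).card := (Finset.mem_filter.1 huP).2
  have hub : ∀ w : ℤ, w < u → (U.filter fun x => g x ≤ w).card < δ + σ := by
    intro w hw
    by_contra hcc
    push_neg at hcc
    have hne : (U.filter fun x => g x ≤ w).Nonempty := Finset.card_pos.1 (by omega)
    have hmm := Finset.max'_mem _ (hne.image g)
    obtain ⟨y, hy, hgy⟩ := Finset.mem_image.1 hmm
    have hyU : y ∈ U := (Finset.mem_filter.1 hy).1
    have hyw : g y ≤ w := (Finset.mem_filter.1 hy).2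
    have heq : U.filter (fun x => g x ≤ g y) = U.filter (fun x => g x ≤ w) := by
      apply Finset.filter_congr
      intro x hxU
      constructor
      · intro h; exact le_trans h hyw
      · intro h
        rw [hgy]
        exact Finset.le_max' _ _ (Finset.mem_image_of_mem g (Finset.mem_filter.2 ⟨hxU, h⟩))
    have hgyP : g y ∈ PU :=
      Finset.mem_filter.2 ⟨Finset.mem_image_of_mem g hyU, by rw [heq]; omega⟩
    have hmin := PU.min'_le _ hgyP
    omega
  have hua : δ ≤ (U.filter fun x => g x < u).card := by
    have h1 := card_le_split U g u
    have h2 := hU u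
    omega
  set PV := (V.image g).filter (fun v => δ + σ ≤ (V.filter fun x => v ≤ g x).card) with hPV
  have hPVne : PV.Nonempty := by
    refine ⟨(V.image g).min' (hVne.image g), Finset.mem_filter.2 ⟨Finset.min'_mem _ _, ?_⟩⟩
    have heq : V.filter (fun x => (V.image g).min' (hVne.image g) ≤ g x) = V := by
      apply Finset.filter_true_of_mem
      intro x hx
      exact Finset.min'_le _ _ (Finset.mem_image_of_mem g hx)
    rw [heq]; omega
  set v' := PV.max' hPVne with hv'
  have hv'P : v' ∈ PV := PV.max'_mem hPVne
  have hv'I : v' ∈ V.image g := (Finset.mem_filter.1 hv'P).1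
  have hv'le : δ + σ ≤ (V.filter fun x => v' ≤ g x).card := (Finset.mem_filter.1 hv'P).2
  have hvb : ∀ w : ℤ, v' < w → (V.filter fun x => w ≤ g x).card < δ + σ := by
    intro w hw
    by_contra hcc
    push_neg at hcc
    have hne : (V.filter fun x => w ≤ g x).Nonempty := Finset.card_pos.1 (by omega)
    have hmm := Finset.min'_mem _ (hne.image g)
    obtain ⟨y, hy, hgy⟩ := Finset.mem_image.1 hmm
    have hyV : y ∈ V := (Finset.mem_filter.1 hy).1
    have hyw : w ≤ g y := (Finset.mem_filter.1 hy).2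
    have heq : V.filter (fun x => g y ≤ g x) = V.filter (fun x => w ≤ g x) := by
      apply Finset.filter_congr
      intro x hxV
      constructor
      · intro h; exact le_trans hyw h
      · intro h
        rw [hgy]
        exact Finset.min'_le _ _ (Finset.mem_image_of_mem g (Finset.mem_filter.2 ⟨hxV, h⟩))
    have hgyP : g y ∈ PV :=
      Finset.mem_filter.2 ⟨Finset.mem_image_of_mem g hyV, by rw [heq]; omega⟩
    have hmax := PV.le_max' _ hgyP
    omega
  have hva : δ ≤ (V.filter fun x => v' < g x).card := by
    have h1 := card_ge_split V g v'
    have h2 := hV v'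
    omega
  rcases le_or_gt u v' with hcase | hcase
  · refine ⟨u, 1, ?_, Or.inl rfl, ?_, ?_⟩
    · left
      obtain ⟨x, hx, hgx⟩ := Finset.mem_image.1 huI
      exact ⟨x, hx, hgx⟩
    · have heq : U.filter (fun x => (1:ℤ) * (g x - u) < 0) = U.filter (fun x => g x < u) := by
        apply Finset.filter_congr
        intro x _
        constructor <;> intro h <;> omega
      rw [heq]; exact hua
    · have hsub : V.filter (fun x => v' < g x) ⊆ V.filter (fun x => 0 < (1:ℤ) * (g x - u)) := by
        intro x hx
        rcases Finset.mem_filter.1 hx with ⟨hxV, hxv⟩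
        exact Finset.mem_filter.2 ⟨hxV, by omega⟩
      exact le_trans hva (Finset.card_le_card hsub)
  · refine ⟨v', -1, ?_, Or.inr rfl, ?_, ?_⟩
    · right
      obtain ⟨x, hx, hgx⟩ := Finset.mem_image.1 hv'I
      exact ⟨x, hx, hgx⟩
    · have heq : U.filter (fun x => (-1:ℤ) * (g x - v') < 0) = U.filter (fun x => v' < g x) := by
        apply Finset.filter_congr
        intro x _
        constructor <;> intro h <;> omega
      rw [heq]
      have h0 := Finset.card_filter_add_card_filter_not (s := U) (p := fun x => g x ≤ v')
      have h1 : U.filter (fun a => ¬ g a ≤ v') = U.filter (fun x => v' < g x) := by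
        apply Finset.filter_congr
        intro x _
        simp [not_le]
      rw [h1] at h0
      have h2 := hub v' hcase
      omega
    · have heq : V.filter (fun x => 0 < (-1:ℤ) * (g x - v')) = V.filter (fun x => g x < v') := by
        apply Finset.filter_congr
        intro x _
        constructor <;> intro h <;> omega
      rw [heq]
      have h0 := Finset.card_filter_add_card_filter_not (s := V) (p := fun x => g x < v')
      have h1 : V.filter (fun a => ¬ g a < v') = V.filter (fun x => v' ≤ g x) := by
        apply Finset.filter_congr
        intro x _
        simp [not_lt]
      rw [h1] at h0
      have h2 : (V.filter fun x => v' + 1 ≤ g x).card < δ + σ := hvb (v' + 1) (by omega)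
      have heqf : V.filter (fun x => v' < g x) = V.filter (fun x => v' + 1 ≤ g x) := by
        apply Finset.filter_congr
        intro x _
        constructor <;> intro h <;> omega
      have h3 := congrArg Finset.card heqf
      have h4 := card_ge_split V g v'
      have h5 := hV v'
      omega


/-- Lemma 6.2: the 3-dimensional balanced point lemma. -/
theorem stmt7 (n : ℕ) (hn : 1 ≤ n) (S : Finset (Pt 3))
    (hS : ∀ x ∈ S, inGrid n 3 x) :
    (∃ (i : Fin 3) (s : Slice 3) (q : Pt 3),
      validSlice n s ∧ s i = none ∧ (∀ j, j ≠ i → s j ≠ none) ∧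
      inGrid n 3 q ∧ inSlice s q ∧
      S.card ≤ 1600 * {x ∈ (S : Set (Pt 3)) | inSlice s x ∧ x i ≤ q i}.ncard ∧
      S.card ≤ 1600 * {x ∈ (S : Set (Pt 3)) | inSlice s x ∧ q i ≤ x i}.ncard) ∨
    (∃ (i j : Fin 3) (s : Slice 3) (q : Pt 3) (φi φj : ℤ),
      i ≠ j ∧ validSlice n s ∧ s i = none ∧ s j = none ∧
      (∀ l, l ≠ i → l ≠ j → s l ≠ none) ∧
      inGrid n 3 q ∧ inSlice s q ∧ (φi = 1 ∨ φi = -1) ∧ (φj = 1 ∨ φj = -1) ∧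
      S.card ≤ 400 * {x ∈ (S : Set (Pt 3)) |
        inSlice s x ∧ 0 < φi * (x i - q i) ∧ 0 < φj * (x j - q j)}.ncard ∧
      S.card ≤ 400 * {x ∈ (S : Set (Pt 3)) |
        inSlice s x ∧ φi * (x i - q i) < 0 ∧ φj * (x j - q j) < 0}.ncard) ∨
    (∃ (q : Pt 3) (φ : Fin 3 → ℤ),
      inGrid n 3 q ∧ (∀ i, φ i = 1 ∨ φ i = -1) ∧
      S.card ≤ 16 * {x ∈ (S : Set (Pt 3)) | ∀ i, 0 < φ i * (x i - q i)}.ncard ∧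
      S.card ≤ 16 * {x ∈ (S : Set (Pt 3)) | ∀ i, φ i * (x i - q i) < 0}.ncard) := by
  classical
  rcases S.eq_empty_or_nonempty with hS0 | hS0
  · right; right
    refine ⟨(fun _ => 1), (fun _ => 1), ?_, fun i => Or.inl rfl, ?_, ?_⟩
    · intro i
      refine ⟨le_refl 1, ?_⟩
      show (1:ℤ) ≤ (n:ℤ)
      exact_mod_cast hn
    · subst hS0; simp
    · subst hS0; simp
  by_cases hsmall : S.card ≤ 1600
  · obtain ⟨x₀, hx₀⟩ := hS0
    left
    set s1 : Slice 3 := fun j => if j = 0 then none else some (x₀ j) with hs1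
    have hs10 : s1 0 = none := by simp [hs1]
    have hs1j : ∀ j, j ≠ 0 → s1 j = some (x₀ j) := by intro j h; simp [hs1, h]
    have hsl : inSlice s1 x₀ := by
      intro j w hw
      by_cases h : j = 0
      · rw [h, hs10] at hw; simp at hw
      · rw [hs1j j h] at hw; exact Option.some_injective _ hw
    refine ⟨0, s1, x₀, ?_, hs10, ?_, hS x₀ hx₀, hsl, ?_, ?_⟩
    · intro j w hw
      by_cases h : j = 0
      · rw [h, hs10] at hw; simp at hw
      · rw [hs1j j h] at hw
        have hw' := Option.some_injective _ hw
        rw [← hw']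
        exact hS x₀ hx₀ j
    · intro j hj
      rw [hs1j j hj]
      simp
    · have harith : S.card ≤ 1600 * 1 := by omega
      have hglue := ncard_glue S {x₀} (fun x => inSlice s1 x ∧ x 0 ≤ x₀ 0)
        (Finset.singleton_subset_iff.2 hx₀)
        (by intro x hx; rw [Finset.mem_singleton] at hx; subst hx; exact ⟨hsl, le_refl _⟩)
      rw [Finset.card_singleton] at hglue
      exact harith.trans (Nat.mul_le_mul_left 1600 hglue)
    · have harith : S.card ≤ 1600 * 1 := by omega
      have hglue := ncard_glue S {x₀} (fun x => inSlice s1 x ∧ x₀ 0 ≤ x 0)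
        (Finset.singleton_subset_iff.2 hx₀)
        (by intro x hx; rw [Finset.mem_singleton] at hx; subst hx; exact ⟨hsl, le_refl _⟩)
      rw [Finset.card_singleton] at hglue
      exact harith.trans (Nat.mul_le_mul_left 1600 hglue)
  push_neg at hsmall
  set m := S.card with hm
  set σ := m / 32 with hσ
  by_cases hplane : ∃ (d : Fin 3) (v : ℤ), σ + 1 ≤ (S.filter fun x => prj d x = v).card
  · obtain ⟨d, v, htc⟩ := hplane
    set T := S.filter (fun x => prj d x = v) with hT
    have hTS : T ⊆ S := Finset.filter_subset _ _
    have hTd : ∀ x ∈ T, prj d x = v := fun x hx => (Finset.mem_filter.1 hx).2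
    set t := T.card with ht
    have htm : t ≤ m := Finset.card_le_card hTS
    obtain ⟨y₀, hy₀T⟩ : T.Nonempty := Finset.card_pos.1 (by omega)
    have hvb : 1 ≤ v ∧ v ≤ (n:ℤ) := by
      have h : 1 ≤ prj d y₀ ∧ prj d y₀ ≤ (n:ℤ) := hS y₀ (hTS hy₀T) d
      rw [hTd y₀ hy₀T] at h
      exact h
    have hTne : T.Nonempty := ⟨y₀, hy₀T⟩
    set σ₂ := t / 24 with hσ₂
    by_cases hline : ∃ (a : Fin 3) (va : ℤ), a ≠ d ∧ σ₂ + 1 ≤ (T.filter fun x => prj a x = va).card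
    · -- heavy line inside the plane : option (i)
      obtain ⟨a, va, had, hlc⟩ := hline
      obtain ⟨i, hid, hia⟩ := fin3_other d a (Ne.symm had)
      set L := T.filter (fun x => prj a x = va) with hL
      have hLT : L ⊆ T := Finset.filter_subset _ _
      have hLa : ∀ x ∈ L, prj a x = va := fun x hx => (Finset.mem_filter.1 hx).2
      obtain ⟨y₁, hy₁L⟩ : L.Nonempty := Finset.card_pos.1 (by omega)
      have hvab : 1 ≤ va ∧ va ≤ (n:ℤ) := by
        have h : 1 ≤ prj a y₁ ∧ prj a y₁ ≤ (n:ℤ) := hS y₁ (hTS (hLT hy₁L)) a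
        rw [hLa y₁ hy₁L] at h
        exact h
      obtain ⟨qi, ⟨x₁, hx₁L, hx₁g⟩, hmed1, hmed2⟩ := exists_median L (prj i) ⟨y₁, hy₁L⟩
      have hqib : 1 ≤ qi ∧ qi ≤ (n:ℤ) := by
        have h : 1 ≤ prj i x₁ ∧ prj i x₁ ≤ (n:ℤ) := hS x₁ (hTS (hLT hx₁L)) i
        rw [hx₁g] at h
        exact h
      set s2 : Slice 3 := fun j => if j = d then some v else if j = a then some va else none
        with hs2
      set q2 : Pt 3 := fun j => if j = d then v else if j = a then va else qi with hq2
      have hs2d : s2 d = some v := by simp [hs2]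
      have hs2a : s2 a = some va := by simp [hs2, had]
      have hs2i : s2 i = none := by simp [hs2, hid, hia]
      have hq2d : q2 d = v := by simp [hq2]
      have hq2a : q2 a = va := by simp [hq2, had]
      have hq2i : q2 i = qi := by simp [hq2, hid, hia]
      have hslx : ∀ x ∈ L, inSlice s2 x := by
        intro x hx j w hw
        rcases fin3_cover d a i j (Ne.symm had) hid hia with h | h | h
        · subst h
          rw [hs2d] at hw
          exact (hTd x (hLT hx)).trans (Option.some_injective _ hw)
        · subst h
          rw [hs2a] at hw
          exact (hLa x hx).trans (Option.some_injective _ hw)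
        · subst h; rw [hs2i] at hw; simp at hw
      left
      refine ⟨i, s2, q2, ?_, hs2i, ?_, ?_, ?_, ?_, ?_⟩
      · intro j w hw
        rcases fin3_cover d a i j (Ne.symm had) hid hia with h | h | h
        · subst h
          rw [hs2d] at hw
          rw [← Option.some_injective _ hw]
          exact hvb
        · subst h
          rw [hs2a] at hw
          rw [← Option.some_injective _ hw]
          exact hvab
        · subst h; rw [hs2i] at hw; simp at hw
      · intro j hji
        rcases fin3_cover d a i j (Ne.symm had) hid hia with h | h | h
        · subst h; rw [hs2d]; simp
        · subst h; rw [hs2a]; simp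
        · exact absurd h hji
      · intro j
        rcases fin3_cover d a i j (Ne.symm had) hid hia with h | h | h
        · subst h; rw [hq2d]; exact hvb
        · subst h; rw [hq2a]; exact hvab
        · subst h; rw [hq2i]; exact hqib
      · intro j w hw
        rcases fin3_cover d a i j (Ne.symm had) hid hia with h | h | h
        · subst h; rw [hs2d] at hw; rw [hq2d]; exact Option.some_injective _ hw
        · subst h; rw [hs2a] at hw; rw [hq2a]; exact Option.some_injective _ hw
        · subst h; rw [hs2i] at hw; simp at hw
      · have harith : m ≤ 1600 * (L.filter fun x => prj i x ≤ qi).card := by omega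
        have hglue := ncard_glue S (L.filter fun x => prj i x ≤ qi)
          (fun x => inSlice s2 x ∧ x i ≤ q2 i)
          ((Finset.filter_subset _ _).trans (hLT.trans hTS))
          (by
            intro x hx
            rcases Finset.mem_filter.1 hx with ⟨hxL, hxle⟩
            refine ⟨hslx x hxL, ?_⟩
            rw [hq2i]
            exact hxle)
        exact harith.trans (Nat.mul_le_mul_left 1600 hglue)
      · have harith : m ≤ 1600 * (L.filter fun x => qi ≤ prj i x).card := by omega
        have hglue := ncard_glue S (L.filter fun x => qi ≤ prj i x)
          (fun x => inSlice s2 x ∧ q2 i ≤ x i)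
          ((Finset.filter_subset _ _).trans (hLT.trans hTS))
          (by
            intro x hx
            rcases Finset.mem_filter.1 hx with ⟨hxL, hxle⟩
            refine ⟨hslx x hxL, ?_⟩
            rw [hq2i]
            exact hxle)
        exact harith.trans (Nat.mul_le_mul_left 1600 hglue)
    · -- no heavy line : option (ii)
      push_neg at hline
      obtain ⟨a, b, hab, had, hbd⟩ := fin3_two d
      obtain ⟨qa, ⟨xa, hxaT, hxag⟩, hma1, hma2⟩ := exists_median T (prj a) hTne
      have hqab : 1 ≤ qa ∧ qa ≤ (n:ℤ) := by
        have h : 1 ≤ prj a xa ∧ prj a xa ≤ (n:ℤ) := hS xa (hTS hxaT) a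
        rw [hxag] at h
        exact h
      set A := T.filter (fun x => prj a x < qa) with hA
      set C := T.filter (fun x => qa < prj a x) with hC
      have hAT : A ⊆ T := Finset.filter_subset _ _
      have hCT : C ⊆ T := Finset.filter_subset _ _
      have hAeq : t ≤ 2 * A.card + 2 * σ₂ := by
        have h1 := card_le_split T (prj a) qa
        rw [← hA] at h1
        have h2 := hline a qa had
        omega
      have hCeq : t ≤ 2 * C.card + 2 * σ₂ := by
        have h1 := card_ge_split T (prj a) qa
        rw [← hC] at h1
        have h2 := hline a qa had
        omega
      set δ₂ := (t - 6 * σ₂) / 4 with hδ₂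
      have hfibA : ∀ w : ℤ, (A.filter fun x => prj b x = w).card ≤ σ₂ := by
        intro w
        have hsub : A.filter (fun x => prj b x = w) ⊆ T.filter (fun x => prj b x = w) := by
          intro x hx
          rcases Finset.mem_filter.1 hx with ⟨hxA, hxw⟩
          exact Finset.mem_filter.2 ⟨hAT hxA, hxw⟩
        have h1 := hline b w hbd
        have h2 := Finset.card_le_card hsub
        omega
      have hfibC : ∀ w : ℤ, (C.filter fun x => prj b x = w).card ≤ σ₂ := by
        intro w
        have hsub : C.filter (fun x => prj b x = w) ⊆ T.filter (fun x => prj b x = w) := by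
          intro x hx
          rcases Finset.mem_filter.1 hx with ⟨hxC, hxw⟩
          exact Finset.mem_filter.2 ⟨hCT hxC, hxw⟩
        have h1 := hline b w hbd
        have h2 := Finset.card_le_card hsub
        omega
      have hδ₂1 : 1 ≤ δ₂ := by omega
      have hUc : 2 * δ₂ + 2 * σ₂ ≤ A.card := by omega
      have hVc : 2 * δ₂ + 2 * σ₂ ≤ C.card := by omega
      obtain ⟨w, ε, hwit, hε, hUcard, hVcard⟩ :=
        sweep A C (prj b) σ₂ δ₂ hδ₂1 hfibA hfibC hUc hVc
      have hwb : 1 ≤ w ∧ w ≤ (n:ℤ) := by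
        rcases hwit with ⟨x, hx, hxg⟩ | ⟨x, hx, hxg⟩
        · have h : 1 ≤ prj b x ∧ prj b x ≤ (n:ℤ) := hS x (hTS (hAT hx)) b
          rw [hxg] at h
          exact h
        · have h : 1 ≤ prj b x ∧ prj b x ≤ (n:ℤ) := hS x (hTS (hCT hx)) b
          rw [hxg] at h
          exact h
      have harithC : m ≤ 400 * (C.filter fun x => 0 < ε * (prj b x - w)).card := by
        clear hwit; omega
      have harithA : m ≤ 400 * (A.filter fun x => ε * (prj b x - w) < 0).card := by
        clear hwit; omega
      set s2 : Slice 3 := fun l => if l = d then some v else none with hs2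
      set q2 : Pt 3 := fun l => if l = d then v else if l = a then qa else w with hq2
      have hs2d : s2 d = some v := by simp [hs2]
      have hs2o : ∀ l, l ≠ d → s2 l = none := by intro l hl; simp [hs2, hl]
      have hq2d : q2 d = v := by simp [hq2]
      have hq2a : q2 a = qa := by simp [hq2, had]
      have hq2b : q2 b = w := by simp [hq2, hbd, Ne.symm hab]
      have hslx : ∀ x ∈ T, inSlice s2 x := by
        intro x hx j w' hw'
        by_cases h1 : j = d
        · subst h1
          rw [hs2d] at hw'
          exact (hTd x hx).trans (Option.some_injective _ hw')
        · rw [hs2o j h1] at hw'; simp at hw'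
      right; left
      refine ⟨a, b, s2, q2, 1, ε, hab, ?_, hs2o a had, hs2o b hbd, ?_, ?_, ?_,
        Or.inl rfl, hε, ?_, ?_⟩
      · intro j w' hw'
        by_cases h1 : j = d
        · subst h1
          rw [hs2d] at hw'
          rw [← Option.some_injective _ hw']
          exact hvb
        · rw [hs2o j h1] at hw'; simp at hw'
      · intro l hla hlb
        rcases fin3_cover a b d l hab (Ne.symm had) (Ne.symm hbd) with h | h | h
        · exact absurd h hla
        · exact absurd h hlb
        · subst h; rw [hs2d]; simp
      · intro j
        rcases fin3_cover a b d j hab (Ne.symm had) (Ne.symm hbd) with h | h | h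
        · subst h; rw [hq2a]; exact hqab
        · subst h; rw [hq2b]; exact hwb
        · subst h; rw [hq2d]; exact hvb
      · intro j w' hw'
        by_cases h1 : j = d
        · subst h1; rw [hs2d] at hw'; rw [hq2d]; exact Option.some_injective _ hw'
        · rw [hs2o j h1] at hw'; simp at hw'
      · have hglue := ncard_glue S (C.filter fun x => 0 < ε * (prj b x - w))
          (fun x => inSlice s2 x ∧ 0 < 1 * (x a - q2 a) ∧ 0 < ε * (x b - q2 b))
          ((Finset.filter_subset _ _).trans (hCT.trans hTS))
          (by
            intro x hx
            rcases Finset.mem_filter.1 hx with ⟨hxC, hxw⟩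
            have hxa' : qa < x a := (Finset.mem_filter.1 hxC).2
            refine ⟨hslx x (hCT hxC), ?_, ?_⟩
            · rw [hq2a]; omega
            · rw [hq2b]; exact hxw)
        exact harithC.trans (Nat.mul_le_mul_left 400 hglue)
      · have hglue := ncard_glue S (A.filter fun x => ε * (prj b x - w) < 0)
          (fun x => inSlice s2 x ∧ 1 * (x a - q2 a) < 0 ∧ ε * (x b - q2 b) < 0)
          ((Finset.filter_subset _ _).trans (hAT.trans hTS))
          (by
            intro x hx
            rcases Finset.mem_filter.1 hx with ⟨hxA, hxw⟩
            have hxa' : x a < qa := (Finset.mem_filter.1 hxA).2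
            refine ⟨hslx x (hAT hxA), ?_, ?_⟩
            · rw [hq2a]; omega
            · rw [hq2b]; exact hxw)
        exact harithA.trans (Nat.mul_le_mul_left 400 hglue)
  · -- no heavy plane : option (iii)
    push_neg at hplane
    obtain ⟨q1v, ⟨z1, hz1, hz1g⟩, hn1, hn2⟩ := exists_median S (prj 0) hS0
    have hq1b : 1 ≤ q1v ∧ q1v ≤ (n:ℤ) := by
      have h : 1 ≤ prj 0 z1 ∧ prj 0 z1 ≤ (n:ℤ) := hS z1 hz1 0
      rw [hz1g] at h
      exact h
    set A := S.filter (fun x => prj 0 x < q1v) with hA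
    set C := S.filter (fun x => q1v < prj 0 x) with hC
    have hAS : A ⊆ S := Finset.filter_subset _ _
    have hCS : C ⊆ S := Finset.filter_subset _ _
    have hAc : m ≤ 2 * A.card + 2 * σ := by
      have h1 := card_le_split S (prj 0) q1v
      rw [← hA] at h1
      have h2 := hplane 0 q1v
      omega
    have hCc : m ≤ 2 * C.card + 2 * σ := by
      have h1 := card_ge_split S (prj 0) q1v
      rw [← hC] at h1
      have h2 := hplane 0 q1v
      omega
    have hAne : A.Nonempty := Finset.card_pos.1 (by omega)
    obtain ⟨q2v, ⟨z2, hz2, hz2g⟩, hmA1, hmA2⟩ := exists_median A (prj 1) hAne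
    have hq2b : 1 ≤ q2v ∧ q2v ≤ (n:ℤ) := by
      have h : 1 ≤ prj 1 z2 ∧ prj 1 z2 ≤ (n:ℤ) := hS z2 (hAS hz2) 1
      rw [hz2g] at h
      exact h
    have hfib1 : ∀ (D : Finset (Pt 3)), D ⊆ S →
        ∀ w : ℤ, (D.filter fun x => prj 1 x = w).card ≤ σ := by
      intro D hDS w
      have hsub : D.filter (fun x => prj 1 x = w) ⊆ S.filter (fun x => prj 1 x = w) := by
        intro x hx
        rcases Finset.mem_filter.1 hx with ⟨hxD, hxw⟩
        exact Finset.mem_filter.2 ⟨hDS hxD, hxw⟩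
      have h1 := hplane 1 w
      have h2 := Finset.card_le_card hsub
      omega
    have hALc : A.card ≤ 2 * (A.filter fun x => prj 1 x < q2v).card + 2 * σ := by
      have h1 := card_le_split A (prj 1) q2v
      have h2 := hfib1 A hAS q2v
      omega
    have hARc : A.card ≤ 2 * (A.filter fun x => q2v < prj 1 x).card + 2 * σ := by
      have h1 := card_ge_split A (prj 1) q2v
      have h2 := hfib1 A hAS q2v
      omega
    have hCsplit : C.card ≤ (C.filter fun x => prj 1 x < q2v).card +
        (C.filter fun x => q2v < prj 1 x).card + σ := by
      have hsub : C ⊆ ((C.filter fun x => prj 1 x < q2v) ∪ (C.filter fun x => q2v < prj 1 x)) ∪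
          (C.filter fun x => prj 1 x = q2v) := by
        intro x hx
        simp only [Finset.mem_union, Finset.mem_filter]
        rcases lt_trichotomy (prj 1 x) q2v with h | h | h
        · exact Or.inl (Or.inl ⟨hx, h⟩)
        · exact Or.inr ⟨hx, h⟩
        · exact Or.inl (Or.inr ⟨hx, h⟩)
      have h1 := Finset.card_le_card hsub
      have h2 := Finset.card_union_le ((C.filter fun x => prj 1 x < q2v) ∪
        (C.filter fun x => q2v < prj 1 x)) (C.filter fun x => prj 1 x = q2v)
      have h3 := Finset.card_union_le (C.filter fun x => prj 1 x < q2v)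
        (C.filter fun x => q2v < prj 1 x)
      have h4 := hfib1 C hCS q2v
      omega
    have key : ∃ (ε₂ : ℤ) (U V : Finset (Pt 3)), (ε₂ = 1 ∨ ε₂ = -1) ∧ U ⊆ S ∧ V ⊆ S ∧
        (∀ x ∈ U, prj 0 x < q1v ∧ ε₂ * (prj 1 x - q2v) < 0) ∧
        (∀ x ∈ V, q1v < prj 0 x ∧ 0 < ε₂ * (prj 1 x - q2v)) ∧
        m ≤ 4 * U.card + 6 * σ ∧ m ≤ 4 * V.card + 4 * σ := by
      rcases le_or_gt (C.filter fun x => prj 1 x < q2v).card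
          (C.filter fun x => q2v < prj 1 x).card with hside | hside
      · refine ⟨1, A.filter (fun x => prj 1 x < q2v), C.filter (fun x => q2v < prj 1 x),
          Or.inl rfl, (Finset.filter_subset _ _).trans hAS,
          (Finset.filter_subset _ _).trans hCS, ?_, ?_, by omega, by omega⟩
        · intro x hx
          rcases Finset.mem_filter.1 hx with ⟨hxA, h2⟩
          have h1 : prj 0 x < q1v := (Finset.mem_filter.1 hxA).2
          exact ⟨h1, by omega⟩
        · intro x hx
          rcases Finset.mem_filter.1 hx with ⟨hxC, h2⟩
          have h1 : q1v < prj 0 x := (Finset.mem_filter.1 hxC).2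
          exact ⟨h1, by omega⟩
      · refine ⟨-1, A.filter (fun x => q2v < prj 1 x), C.filter (fun x => prj 1 x < q2v),
          Or.inr rfl, (Finset.filter_subset _ _).trans hAS,
          (Finset.filter_subset _ _).trans hCS, ?_, ?_, by omega, by omega⟩
        · intro x hx
          rcases Finset.mem_filter.1 hx with ⟨hxA, h2⟩
          have h1 : prj 0 x < q1v := (Finset.mem_filter.1 hxA).2
          exact ⟨h1, by omega⟩
        · intro x hx
          rcases Finset.mem_filter.1 hx with ⟨hxC, h2⟩
          have h1 : q1v < prj 0 x := (Finset.mem_filter.1 hxC).2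
          exact ⟨h1, by omega⟩
    obtain ⟨ε₂, U, V, hε₂, hUS, hVS, hUf, hVf, hUsz, hVsz⟩ := key
    set δ₃ := (m - 14 * σ) / 8 with hδ₃
    have hδ₃1 : 1 ≤ δ₃ := by omega
    have hfibU : ∀ w : ℤ, (U.filter fun x => prj 2 x = w).card ≤ σ := by
      intro w
      have hsub : U.filter (fun x => prj 2 x = w) ⊆ S.filter (fun x => prj 2 x = w) := by
        intro x hx
        rcases Finset.mem_filter.1 hx with ⟨hxU, hxw⟩
        exact Finset.mem_filter.2 ⟨hUS hxU, hxw⟩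
      have h1 := hplane 2 w
      have h2 := Finset.card_le_card hsub
      omega
    have hfibV : ∀ w : ℤ, (V.filter fun x => prj 2 x = w).card ≤ σ := by
      intro w
      have hsub : V.filter (fun x => prj 2 x = w) ⊆ S.filter (fun x => prj 2 x = w) := by
        intro x hx
        rcases Finset.mem_filter.1 hx with ⟨hxV, hxw⟩
        exact Finset.mem_filter.2 ⟨hVS hxV, hxw⟩
      have h1 := hplane 2 w
      have h2 := Finset.card_le_card hsub
      omega
    have hUc2 : 2 * δ₃ + 2 * σ ≤ U.card := by omega
    have hVc2 : 2 * δ₃ + 2 * σ ≤ V.card := by omega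
    obtain ⟨w, ε, hwit, hε, hUcard, hVcard⟩ :=
      sweep U V (prj 2) σ δ₃ hδ₃1 hfibU hfibV hUc2 hVc2
    have hwb : 1 ≤ w ∧ w ≤ (n:ℤ) := by
      rcases hwit with ⟨x, hx, hxg⟩ | ⟨x, hx, hxg⟩
      · have h : 1 ≤ prj 2 x ∧ prj 2 x ≤ (n:ℤ) := hS x (hUS hx) 2
        rw [hxg] at h
        exact h
      · have h : 1 ≤ prj 2 x ∧ prj 2 x ≤ (n:ℤ) := hS x (hVS hx) 2
        rw [hxg] at h
        exact h
    have harithV : m ≤ 16 * (V.filter fun x => 0 < ε * (prj 2 x - w)).card := by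
      clear hwit; omega
    have harithU : m ≤ 16 * (U.filter fun x => ε * (prj 2 x - w) < 0).card := by
      clear hwit; omega
    set qq : Pt 3 := fun j => if j = 0 then q1v else if j = 1 then q2v else w with hqq
    set φ : Fin 3 → ℤ := fun j => if j = 0 then 1 else if j = 1 then ε₂ else ε with hφ
    have hqq0 : qq 0 = q1v := by simp [hqq]
    have hqq1 : qq 1 = q2v := by simp [hqq]
    have hqq2 : qq 2 = w := by simp [hqq]
    have hφ0 : φ 0 = 1 := by simp [hφ]
    have hφ1 : φ 1 = ε₂ := by simp [hφ]
    have hφ2 : φ 2 = ε := by simp [hφ]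
    right; right
    refine ⟨qq, φ, ?_, ?_, ?_, ?_⟩
    · intro j
      rcases fin3_cover 0 1 2 j (by decide) (by decide) (by decide) with h | h | h
      · subst h; rw [hqq0]; exact hq1b
      · subst h; rw [hqq1]; exact hq2b
      · subst h; rw [hqq2]; exact hwb
    · intro j
      rcases fin3_cover 0 1 2 j (by decide) (by decide) (by decide) with h | h | h
      · subst h; rw [hφ0]; exact Or.inl rfl
      · subst h; rw [hφ1]; exact hε₂
      · subst h; rw [hφ2]; exact hε
    · have hglue := ncard_glue S (V.filter fun x => 0 < ε * (prj 2 x - w))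
        (fun x => ∀ i, 0 < φ i * (x i - qq i))
        ((Finset.filter_subset _ _).trans hVS)
        (by
          intro x hx
          rcases Finset.mem_filter.1 hx with ⟨hxV, hxw⟩
          obtain ⟨h1, h2⟩ := hVf x hxV
          have h1' : q1v < x 0 := h1
          intro j
          rcases fin3_cover 0 1 2 j (by decide) (by decide) (by decide) with h | h | h
          · subst h; rw [hφ0, hqq0]; omega
          · subst h; rw [hφ1, hqq1]; exact h2
          · subst h; rw [hφ2, hqq2]; exact hxw)
      exact harithV.trans (Nat.mul_le_mul_left 16 hglue)
    · have hglue := ncard_glue S (U.filter fun x => ε * (prj 2 x - w) < 0)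
        (fun x => ∀ i, φ i * (x i - qq i) < 0)
        ((Finset.filter_subset _ _).trans hUS)
        (by
          intro x hx
          rcases Finset.mem_filter.1 hx with ⟨hxU, hxw⟩
          obtain ⟨h1, h2⟩ := hUf x hxU
          have h1' : x 0 < q1v := h1
          intro j
          rcases fin3_cover 0 1 2 j (by decide) (by decide) (by decide) with h | h | h
          · subst h; rw [hφ0, hqq0]; omega
          · subst h; rw [hφ1, hqq1]; exact h2
          · subst h; rw [hφ2, hqq2]; exact hxw)
      exact harithU.trans (Nat.mul_le_mul_left 16 hglue)
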